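/- arXiv:1808.10386 — 3 statements merged into one kernel-verified Lean document; each statement's English description precedes it below -/
import Mathlib

section
/- Let u be a smooth axially symmetric solution of the stationary Navier–Stokes system (ASNS), defined on all of ℝ³ and 2π-periodic in z, with u(x) → 0 uniformly as r = |x'| → ∞ and ∫_{−π}^{π}∫₀^∞ |∇u|² r dr dz < ∞. Then ∫_{−π}^{π} u^r(r,z) dz = 0 for every r > 0, and there is an absolute constant C such that ∫_{−π}^{π}∫₀^∞ |u^r(r,z)|² r dr dz ≤ C ∫_{−π}^{π}∫₀^∞ |∇u|² r dr dz; in particular u^r ∈ L²(ℝ²×[−π,π]). -/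
open MeasureTheory Real

/-- `∂_r f` for a function `f = f(r,z)`. -/
noncomputable def pdr (f : ℝ → ℝ → ℝ) (r z : ℝ) : ℝ := deriv (fun s => f s z) r

/-- `∂_z f` for a function `f = f(r,z)`. -/
noncomputable def pdz (f : ℝ → ℝ → ℝ) (r z : ℝ) : ℝ := deriv (fun t => f r t) z

/-- The axially symmetric stationary Navier–Stokes system (ASNS), imposed for all
`r > 0` and all `z ∈ S`. -/
def ASNS (ur uθ uz p : ℝ → ℝ → ℝ) (S : Set ℝ) : Prop :=
  ∀ r : ℝ, 0 < r → ∀ z ∈ S,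
    ((ur r z * pdr ur r z + uz r z * pdz ur r z) - (uθ r z) ^ 2 / r + pdr p r z
        = pdr (pdr ur) r z + (1 / r) * pdr ur r z + pdz (pdz ur) r z - ur r z / r ^ 2)
    ∧ ((ur r z * pdr uθ r z + uz r z * pdz uθ r z) + ur r z * uθ r z / r
        = pdr (pdr uθ) r z + (1 / r) * pdr uθ r z + pdz (pdz uθ) r z - uθ r z / r ^ 2)
    ∧ ((ur r z * pdr uz r z + uz r z * pdz uz r z) + pdz p r z
        = pdr (pdr uz) r z + (1 / r) * pdr uz r z + pdz (pdz uz) r z)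
    ∧ (pdr ur r z + ur r z / r + pdz uz r z = 0)

/-- The Dirichlet integrand `|∇u|²` of an axially symmetric field. -/
noncomputable def dirE (ur uθ uz : ℝ → ℝ → ℝ) (r z : ℝ) : ℝ :=
  (pdr ur r z) ^ 2 + (pdz ur r z) ^ 2 + (pdr uθ r z) ^ 2 + (pdz uθ r z) ^ 2
    + (pdr uz r z) ^ 2 + (pdz uz r z) ^ 2 + ((ur r z) ^ 2 + (uθ r z) ^ 2) / r ^ 2

/-! The divergence equation says `∂_r (r u^r) = -r ∂_z u^z`, so by periodicity in `z` the flux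
`r ↦ ∫ r u^r dz` has zero derivative on `r > 0`; it vanishes at `r = 0`, hence for all `r`.
Zero mean in `z` gives the Poincaré inequality `∫ |u^r|² dz ≤ (2π)² ∫ |∂_z u^r|² dz` on every
slice `r = const`, and integrating against `r dr` bounds the weighted `L²` norm of `u^r` by the
Dirichlet integral with `C = 4π²`. -/

open Set

section PartialDerivatives

variable {f : ℝ → ℝ → ℝ}

theorem hasDerivAt_fderiv_fst (hf : ContDiff ℝ 1 (fun q : ℝ × ℝ => f q.1 q.2)) (r z : ℝ) :
    HasDerivAt (fun s => f s z) (fderiv ℝ (fun q : ℝ × ℝ => f q.1 q.2) (r, z) (1, 0)) r := by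
  have hF := (hf.differentiable one_ne_zero (r, z)).hasFDerivAt
  exact hF.comp_hasDerivAt r ((hasDerivAt_id r).prodMk (hasDerivAt_const r z))

theorem hasDerivAt_fderiv_snd (hf : ContDiff ℝ 1 (fun q : ℝ × ℝ => f q.1 q.2)) (r z : ℝ) :
    HasDerivAt (fun t => f r t) (fderiv ℝ (fun q : ℝ × ℝ => f q.1 q.2) (r, z) (0, 1)) z := by
  have hF := (hf.differentiable one_ne_zero (r, z)).hasFDerivAt
  exact hF.comp_hasDerivAt z ((hasDerivAt_const z r).prodMk (hasDerivAt_id z))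

theorem pdr_eq_fderiv (hf : ContDiff ℝ 1 (fun q : ℝ × ℝ => f q.1 q.2)) (r z : ℝ) :
    pdr f r z = fderiv ℝ (fun q : ℝ × ℝ => f q.1 q.2) (r, z) (1, 0) :=
  (hasDerivAt_fderiv_fst hf r z).deriv

theorem pdz_eq_fderiv (hf : ContDiff ℝ 1 (fun q : ℝ × ℝ => f q.1 q.2)) (r z : ℝ) :
    pdz f r z = fderiv ℝ (fun q : ℝ × ℝ => f q.1 q.2) (r, z) (0, 1) :=
  (hasDerivAt_fderiv_snd hf r z).deriv

theorem hasDerivAt_pdr (hf : ContDiff ℝ 1 (fun q : ℝ × ℝ => f q.1 q.2)) (r z : ℝ) :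
    HasDerivAt (fun s => f s z) (pdr f r z) r :=
  pdr_eq_fderiv hf r z ▸ hasDerivAt_fderiv_fst hf r z

theorem hasDerivAt_pdz (hf : ContDiff ℝ 1 (fun q : ℝ × ℝ => f q.1 q.2)) (r z : ℝ) :
    HasDerivAt (fun t => f r t) (pdz f r z) z :=
  pdz_eq_fderiv hf r z ▸ hasDerivAt_fderiv_snd hf r z

theorem continuous_pdr (hf : ContDiff ℝ 1 (fun q : ℝ × ℝ => f q.1 q.2)) :
    Continuous (fun q : ℝ × ℝ => pdr f q.1 q.2) := by
  simp only [pdr_eq_fderiv hf]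
  exact (hf.continuous_fderiv one_ne_zero).clm_apply continuous_const

theorem continuous_pdz (hf : ContDiff ℝ 1 (fun q : ℝ × ℝ => f q.1 q.2)) :
    Continuous (fun q : ℝ × ℝ => pdz f q.1 q.2) := by
  simp only [pdz_eq_fderiv hf]
  exact (hf.continuous_fderiv one_ne_zero).clm_apply continuous_const

theorem hasDerivAt_intervalIntegral_of_contDiff
    (hf : ContDiff ℝ 1 (fun q : ℝ × ℝ => f q.1 q.2)) (a b r : ℝ) :
    HasDerivAt (fun s => ∫ z in a..b, f s z) (∫ z in a..b, pdr f r z) r := by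
  obtain ⟨C, hC⟩ := ((isCompact_closedBall r 1).prod isCompact_uIcc).exists_bound_of_continuousOn
    (continuous_pdr hf).continuousOn
  refine (intervalIntegral.hasDerivAt_integral_of_dominated_loc_of_deriv_le (bound := fun _ => C)
    (Metric.ball_mem_nhds r one_pos)
    (Filter.Eventually.of_forall fun s =>
      (hf.continuous.comp (Continuous.prodMk_right s)).aestronglyMeasurable)
    ((hf.continuous.comp (Continuous.prodMk_right r)).intervalIntegrable _ _)
    ((continuous_pdr hf).comp (Continuous.prodMk_right r)).aestronglyMeasurable
    (ae_of_all _ fun t ht s hs =>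
      hC (s, t) ⟨Metric.ball_subset_closedBall hs, uIoc_subset_uIcc ht⟩)
    intervalIntegrable_const (ae_of_all _ fun t _ s _ => hasDerivAt_pdr hf s t)).2

theorem intervalIntegral_pdz (hf : ContDiff ℝ 1 (fun q : ℝ × ℝ => f q.1 q.2)) (a b r : ℝ) :
    ∫ z in a..b, pdz f r z = f r b - f r a :=
  intervalIntegral.integral_eq_sub_of_hasDerivAt (fun z _ => hasDerivAt_pdz hf r z)
    (((continuous_pdz hf).comp (Continuous.prodMk_right r)).intervalIntegrable _ _)

end PartialDerivatives

theorem intervalIntegral_eq_zero_of_divergence_eq_zero {ur uz : ℝ → ℝ → ℝ} {a b : ℝ}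
    (hur : ContDiff ℝ 1 (fun q : ℝ × ℝ => ur q.1 q.2))
    (huz : ContDiff ℝ 1 (fun q : ℝ × ℝ => uz q.1 q.2)) (hper : ∀ r, uz r b = uz r a)
    (hdiv : ∀ r, 0 < r → ∀ z ∈ uIcc a b, pdr ur r z + ur r z / r + pdz uz r z = 0)
    {r : ℝ} (hr : 0 < r) : ∫ z in a..b, ur r z = 0 := by
  have hflux : ContDiff ℝ 1 (fun q : ℝ × ℝ => q.1 * ur q.1 q.2) := contDiff_fst.mul hur
  have hpdr_flux : ∀ s z, pdr (fun s z => s * ur s z) s z = ur s z + s * pdr ur s z :=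
    fun s z => by
      rw [pdr, ((hasDerivAt_id' s).fun_mul (hasDerivAt_pdr hur s z)).deriv, one_mul]
  have hderiv_zero : ∀ s, 0 < s → ∫ z in a..b, pdr (fun s z => s * ur s z) s z = 0 := by
    intro s hs
    have hdiv' : EqOn (pdr (fun s z => s * ur s z) s) (fun z => -s * pdz uz s z) (uIcc a b) := by
      intro z hz
      have h := hdiv s hs z hz
      field_simp at h
      rw [hpdr_flux]
      linarith
    rw [intervalIntegral.integral_congr hdiv', intervalIntegral.integral_const_mul,
      intervalIntegral_pdz huz, hper, sub_self, mul_zero]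
  have hG := hasDerivAt_intervalIntegral_of_contDiff (f := fun s z => s * ur s z) hflux a b
  obtain ⟨c, hc, hc'⟩ := exists_hasDerivAt_eq_slope (fun s => ∫ z in a..b, s * ur s z) _ hr
    (fun s _ => (hG s).continuousAt.continuousWithinAt) (fun s _ => hG s)
  rw [hderiv_zero c hc.1, eq_comm, div_eq_zero_iff] at hc'
  simpa [intervalIntegral.integral_const_mul, hr.ne'] using hc'

section Poincare

variable {a b : ℝ}

theorem sq_intervalIntegral_le {g : ℝ → ℝ} (hg : Continuous g) (hab : a ≤ b) :
    (∫ x in a..b, g x) ^ 2 ≤ (b - a) * ∫ x in a..b, g x ^ 2 := by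
  rcases hab.eq_or_lt with rfl | hab
  · simp
  set m := (∫ x in a..b, g x) / (b - a)
  -- the variance of `g` about its mean `m` is nonnegative
  have hvar : 0 ≤ ∫ x in a..b, (g x - m) ^ 2 :=
    intervalIntegral.integral_nonneg hab.le fun x _ => sq_nonneg _
  have hexpand : ∫ x in a..b, (g x - m) ^ 2
      = (∫ x in a..b, g x ^ 2) - (∫ x in a..b, g x) ^ 2 / (b - a) := by
    simp only [sub_sq, mul_assoc]
    rw [intervalIntegral.integral_add, intervalIntegral.integral_sub,
      intervalIntegral.integral_const_mul, intervalIntegral.integral_mul_const,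
      intervalIntegral.integral_const, smul_eq_mul]
    · simp only [m]
      field_simp
      ring
    all_goals exact Continuous.intervalIntegrable (by fun_prop) _ _
  rw [hexpand, sub_nonneg, div_le_iff₀ (sub_pos.2 hab)] at hvar
  linarith

theorem sq_sub_le_integral_deriv_sq {f : ℝ → ℝ} (hf : ContDiff ℝ 1 f) {y z : ℝ}
    (hy : y ∈ Icc a b) (hz : z ∈ Icc a b) :
    (f z - f y) ^ 2 ≤ (b - a) * ∫ x in a..b, deriv f x ^ 2 := by
  wlog hyz : y ≤ z generalizing y z
  · rw [← neg_sub, neg_sq]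
    exact this hz hy (le_of_not_ge hyz)
  have hf' : Continuous (deriv f) := hf.continuous_deriv le_rfl
  calc (f z - f y) ^ 2 = (∫ x in y..z, deriv f x) ^ 2 := by
        rw [intervalIntegral.integral_deriv_eq_sub
          (fun x _ => hf.differentiable one_ne_zero x) (hf'.intervalIntegrable _ _)]
    _ ≤ (z - y) * ∫ x in y..z, deriv f x ^ 2 := sq_intervalIntegral_le hf' hyz
    _ ≤ (b - a) * ∫ x in a..b, deriv f x ^ 2 :=
        mul_le_mul (by linarith [hz.2, hy.1])
          (intervalIntegral.integral_mono_interval hy.1 hyz hz.2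
            (ae_of_all _ fun x => sq_nonneg (deriv f x)) ((hf'.pow 2).intervalIntegrable _ _))
          (intervalIntegral.integral_nonneg hyz fun x _ => sq_nonneg _) (by linarith [hz.2, hy.1])

theorem intervalIntegral_sq_le_of_integral_eq_zero {f : ℝ → ℝ} (hf : ContDiff ℝ 1 f)
    (hab : a ≤ b) (h0 : ∫ x in a..b, f x = 0) :
    ∫ x in a..b, f x ^ 2 ≤ (b - a) ^ 2 * ∫ x in a..b, deriv f x ^ 2 := by
  rcases hab.eq_or_lt with rfl | hab
  · simp
  have hne : (Icc a b).Nonempty := nonempty_Icc.2 hab.le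
  obtain ⟨y, hy, hmin⟩ := isCompact_Icc.exists_isMinOn hne hf.continuous.continuousOn
  obtain ⟨z, hz, hmax⟩ := isCompact_Icc.exists_isMaxOn hne hf.continuous.continuousOn
  -- zero mean puts the minimum below `0` and the maximum above, so `|f x| ≤ f z - f y`
  have hy0 : f y ≤ 0 := by
    have : ∫ _ in a..b, f y ≤ ∫ x in a..b, f x :=
      intervalIntegral.integral_mono_on hab.le intervalIntegrable_const
        (hf.continuous.intervalIntegrable _ _) fun x hx => isMinOn_iff.1 hmin x hx
    rw [intervalIntegral.integral_const, smul_eq_mul, h0] at this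
    exact nonpos_of_mul_nonpos_right this (sub_pos.2 hab)
  have hz0 : 0 ≤ f z := by
    have : ∫ x in a..b, f x ≤ ∫ _ in a..b, f z :=
      intervalIntegral.integral_mono_on hab.le (hf.continuous.intervalIntegrable _ _)
        intervalIntegrable_const fun x hx => isMaxOn_iff.1 hmax x hx
    rw [intervalIntegral.integral_const, smul_eq_mul, h0] at this
    exact nonneg_of_mul_nonneg_right this (sub_pos.2 hab)
  calc ∫ x in a..b, f x ^ 2 ≤ ∫ _ in a..b, (b - a) * ∫ x in a..b, deriv f x ^ 2 := by
        refine intervalIntegral.integral_mono_on hab.le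
          ((hf.continuous.pow 2).intervalIntegrable _ _) intervalIntegrable_const fun x hx => ?_
        have hlo := isMinOn_iff.1 hmin x hx
        have hhi := isMaxOn_iff.1 hmax x hx
        exact (sq_le_sq' (by linarith) (by linarith)).trans (sq_sub_le_integral_deriv_sq hf hy hz)
    _ = (b - a) ^ 2 * ∫ x in a..b, deriv f x ^ 2 := by
        rw [intervalIntegral.integral_const, smul_eq_mul]
        ring

end Poincare

section Slicing

variable {f g : ℝ → ℝ → ℝ} {s : Set ℝ} {a b : ℝ}

theorem setLIntegral_prod_Icc_eq (hf : Continuous (fun q : ℝ × ℝ => f q.1 q.2))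
    (hs : MeasurableSet s) (hf0 : ∀ r ∈ s, ∀ z ∈ Icc a b, 0 ≤ f r z) (hab : a ≤ b) :
    ∫⁻ q in s ×ˢ Icc a b, ENNReal.ofReal (f q.1 q.2)
      = ∫⁻ r in s, ENNReal.ofReal (∫ z in a..b, f r z) := by
  rw [Measure.volume_eq_prod, ← Measure.prod_restrict,
    lintegral_prod _ hf.measurable.ennreal_ofReal.aemeasurable]
  refine setLIntegral_congr_fun hs fun r hr => ?_
  have hslice : Continuous (f r) := hf.comp (Continuous.prodMk_right r)
  rw [intervalIntegral.integral_of_le hab, ← integral_Icc_eq_integral_Ioc,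
    ofReal_integral_eq_lintegral_ofReal hslice.continuousOn.integrableOn_Icc
      (ae_restrict_of_forall_mem measurableSet_Icc (hf0 r hr))]

theorem setLIntegral_prod_Icc_le_of_intervalIntegral_le
    (hf : Continuous (fun q : ℝ × ℝ => f q.1 q.2)) (hg : Continuous (fun q : ℝ × ℝ => g q.1 q.2))
    (hs : MeasurableSet s) (hf0 : ∀ r ∈ s, ∀ z ∈ Icc a b, 0 ≤ f r z)
    (hg0 : ∀ r ∈ s, ∀ z ∈ Icc a b, 0 ≤ g r z) (hab : a ≤ b) {C : ℝ} (hC : 0 ≤ C)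
    (hfg : ∀ r ∈ s, ∫ z in a..b, f r z ≤ C * ∫ z in a..b, g r z) :
    ∫⁻ q in s ×ˢ Icc a b, ENNReal.ofReal (f q.1 q.2)
      ≤ ENNReal.ofReal C * ∫⁻ q in s ×ˢ Icc a b, ENNReal.ofReal (g q.1 q.2) := by
  rw [setLIntegral_prod_Icc_eq hf hs hf0 hab, setLIntegral_prod_Icc_eq hg hs hg0 hab,
    ← lintegral_const_mul' _ _ ENNReal.ofReal_ne_top]
  refine setLIntegral_mono' hs fun r hr => ?_
  rw [← ENNReal.ofReal_mul hC]
  exact ENNReal.ofReal_le_ofReal (hfg r hr)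

end Slicing

theorem setLIntegral_sq_mul_le_sq_pdz_mul {u : ℝ → ℝ → ℝ}
    (hu : ContDiff ℝ 1 (fun q : ℝ × ℝ => u q.1 q.2)) {s : Set ℝ} (hs : MeasurableSet s)
    (hs0 : ∀ r ∈ s, 0 ≤ r) {a b : ℝ} (hab : a ≤ b) (hmean : ∀ r ∈ s, ∫ z in a..b, u r z = 0) :
    ∫⁻ q in s ×ˢ Icc a b, ENNReal.ofReal (u q.1 q.2 ^ 2 * q.1)
      ≤ ENNReal.ofReal ((b - a) ^ 2) *
        ∫⁻ q in s ×ˢ Icc a b, ENNReal.ofReal (pdz u q.1 q.2 ^ 2 * q.1) := by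
  refine setLIntegral_prod_Icc_le_of_intervalIntegral_le ((hu.continuous.pow 2).mul continuous_fst)
    (((continuous_pdz hu).pow 2).mul continuous_fst) hs
    (fun r hr _ _ => mul_nonneg (sq_nonneg _) (hs0 r hr))
    (fun r hr _ _ => mul_nonneg (sq_nonneg _) (hs0 r hr)) hab (sq_nonneg _) fun r hr => ?_
  have hpoincare := intervalIntegral_sq_le_of_integral_eq_zero
    (hu.comp (contDiff_const.prodMk contDiff_id)) hab (hmean r hr)
  simp only [intervalIntegral.integral_mul_const, ← mul_assoc]
  exact mul_le_mul_of_nonneg_right hpoincare (hs0 r hr)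

theorem sq_pdz_le_dirE (ur uθ uz : ℝ → ℝ → ℝ) (r z : ℝ) :
    pdz ur r z ^ 2 ≤ dirE ur uθ uz r z := by
  unfold dirE
  have : 0 ≤ (ur r z ^ 2 + uθ r z ^ 2) / r ^ 2 := by positivity
  nlinarith [sq_nonneg (pdr ur r z), sq_nonneg (pdr uθ r z), sq_nonneg (pdz uθ r z),
    sq_nonneg (pdr uz r z), sq_nonneg (pdz uz r z)]

theorem lintegral_sq_pdz_mul_le_dirE_mul (ur uθ uz : ℝ → ℝ → ℝ) (μ : Measure (ℝ × ℝ)) :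
    ∫⁻ q, ENNReal.ofReal (pdz ur q.1 q.2 ^ 2 * q.1) ∂μ
      ≤ ∫⁻ q, ENNReal.ofReal (dirE ur uθ uz q.1 q.2 * q.1) ∂μ := by
  refine lintegral_mono fun q => ?_
  rcases le_total 0 q.1 with hq | hq
  · exact ENNReal.ofReal_le_ofReal (mul_le_mul_of_nonneg_right (sq_pdz_le_dirE ur uθ uz _ _) hq)
  · rw [ENNReal.ofReal_of_nonpos (mul_nonpos_of_nonneg_of_nonpos (sq_nonneg _) hq)]
    exact zero_le

/-- For a smooth axially symmetric, `2π`-periodic-in-`z` D-solution of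
ASNS on `ℝ³` with uniform decay and finite Dirichlet integral, `u^r` has zero mean in `z`
and its weighted `L²` norm is controlled by the Dirichlet integral with an absolute
constant; in particular `u^r ∈ L²(ℝ² × [−π,π])`. -/
theorem radial_component_mean_zero_and_L2 :
    ∃ C : ℝ, 0 < C ∧
      ∀ ur uθ uz p : ℝ → ℝ → ℝ,
        ContDiff ℝ (⊤ : ℕ∞) (fun q : ℝ × ℝ => ur q.1 q.2) →
        ContDiff ℝ (⊤ : ℕ∞) (fun q : ℝ × ℝ => uθ q.1 q.2) →
        ContDiff ℝ (⊤ : ℕ∞) (fun q : ℝ × ℝ => uz q.1 q.2) →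
        ContDiff ℝ (⊤ : ℕ∞) (fun q : ℝ × ℝ => p q.1 q.2) →
        (∀ r z : ℝ, ur r (z + 2 * π) = ur r z ∧ uθ r (z + 2 * π) = uθ r z
          ∧ uz r (z + 2 * π) = uz r z ∧ p r (z + 2 * π) = p r z) →
        ASNS ur uθ uz p Set.univ →
        (∀ ε : ℝ, 0 < ε → ∃ R : ℝ, ∀ r : ℝ, R ≤ r → ∀ z : ℝ,
          |ur r z| + |uθ r z| + |uz r z| < ε) →
        (∫⁻ q in Set.Ioi (0:ℝ) ×ˢ Set.Icc (-π) π,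
          ENNReal.ofReal (dirE ur uθ uz q.1 q.2 * q.1) < ⊤) →
        (∀ r : ℝ, 0 < r → (∫ z in (-π)..π, ur r z) = 0) ∧
          (∫⁻ q in Set.Ioi (0:ℝ) ×ˢ Set.Icc (-π) π,
              ENNReal.ofReal ((ur q.1 q.2) ^ 2 * q.1)
            ≤ ENNReal.ofReal C * ∫⁻ q in Set.Ioi (0:ℝ) ×ˢ Set.Icc (-π) π,
              ENNReal.ofReal (dirE ur uθ uz q.1 q.2 * q.1)) ∧
          IntegrableOn (fun q : ℝ × ℝ => (ur q.1 q.2) ^ 2 * q.1)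
            (Set.Ioi (0:ℝ) ×ˢ Set.Icc (-π) π) := by
  refine ⟨(2 * π) ^ 2, by positivity, ?_⟩
  intro ur uθ uz p hur _ huz _ hper hASNS _ hfin
  replace hur : ContDiff ℝ 1 (fun q : ℝ × ℝ => ur q.1 q.2) := hur.of_le (by exact_mod_cast le_top)
  replace huz : ContDiff ℝ 1 (fun q : ℝ × ℝ => uz q.1 q.2) := huz.of_le (by exact_mod_cast le_top)
  have hmean : ∀ r, 0 < r → ∫ z in (-π)..π, ur r z = 0 := fun r hr =>
    intervalIntegral_eq_zero_of_divergence_eq_zero hur huz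
      (fun r => by simpa [two_mul] using (hper r (-π)).2.2.1)
      (fun r hr z _ => (hASNS r hr z (mem_univ z)).2.2.2) hr
  have hpoincare := setLIntegral_sq_mul_le_sq_pdz_mul hur measurableSet_Ioi
    (fun r hr => le_of_lt hr) (by linarith [pi_pos]) hmean
  rw [sub_neg_eq_add, ← two_mul] at hpoincare
  have hbound := hpoincare.trans (mul_le_mul_right (lintegral_sq_pdz_mul_le_dirE_mul ur uθ uz _) _)
  refine ⟨hmean, hbound, (lintegral_ofReal_ne_top_iff_integrable
    ((hur.continuous.pow 2).mul continuous_fst).aestronglyMeasurable ?_).1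
    (hbound.trans_lt (ENNReal.mul_lt_top ENNReal.ofReal_lt_top hfin)).ne⟩
  exact ae_restrict_of_forall_mem (measurableSet_Ioi.prod measurableSet_Icc)
    fun q hq => mul_nonneg (sq_nonneg _) (le_of_lt hq.1)
end

section
/- There is an absolute constant c > 0 such that for all x = (x', x₃) and y = (y', y₃) in ℝ²×[0,1] with x' ≠ y', the Green function satisfies |G(x,y)| ≤ c / ( |x'−y'|(1 + |x'−y'|) + |x₃−y₃| ). -/
/-!
Write `f t = 1 / √(d² + t²)` with `d = ‖x' - y'‖`; the `n`-th term of the series is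
`f (x₃ - y₃ + 2n) - f (x₃ + y₃ - 2n)`. For `n = 0, ±1` both arguments have modulus at least
`|x₃ - y₃|`, so the term is `O(1 / (d + |x₃ - y₃|))`, and it is `O(d⁻³)` because the squares of
its arguments differ by at most `12`. For `n ≥ 2` the terms `n` and `-n` together are two second
differences of `p ↦ 1 / √p` with steps `8n(x₃ ∓ y₃)` plus a first difference with step `4 x₃ y₃`,
all at points `≥ ((d + n) / 2)²`, hence `O((d + n)⁻³)`; summing over `n ≥ 2` gives
`O((1 + d)⁻²)`.
-/

open Real

/-- The general term of the series defining the Green function of the Laplacian on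
`ℝ² × [0,1]` with Dirichlet boundary conditions; `d = |x' − y'|`. -/
noncomputable def greenTerm (d x3 y3 : ℝ) (n : ℤ) : ℝ :=
  1 / Real.sqrt (d ^ 2 + (x3 - y3 + 2 * (n : ℝ)) ^ 2)
    - 1 / Real.sqrt (d ^ 2 + (x3 + y3 - 2 * (n : ℝ)) ^ 2)

/-- The Green function of the Laplacian on `ℝ² × [0,1]` with Dirichlet boundary
conditions. -/
noncomputable def greenG (x' : EuclideanSpace ℝ (Fin 2)) (x3 : ℝ)
    (y' : EuclideanSpace ℝ (Fin 2)) (y3 : ℝ) : ℝ :=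
  (1 / (4 * π)) * ∑' n : ℤ, greenTerm (‖x' - y'‖) x3 y3 n

lemma abs_inv_sqrt_sub_inv_sqrt_le {p q m : ℝ} (hm : 0 < m) (hp : m ^ 2 ≤ p) (hq : m ^ 2 ≤ q) :
    |1 / √p - 1 / √q| ≤ |p - q| / (2 * m ^ 3) := by
  have hpq : p - q = √p ^ 2 - √q ^ 2 := by
    rw [Real.sq_sqrt (by nlinarith), Real.sq_sqrt (by nlinarith)]
  have ha : m ≤ √p := Real.le_sqrt_of_sq_le hp
  have hb : m ≤ √q := Real.le_sqrt_of_sq_le hq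
  set a := √p
  set b := √q
  have hab : 2 * m ^ 3 ≤ a * b * (a + b) := by
    calc 2 * m ^ 3 = m * m * (m + m) := by ring
      _ ≤ a * b * (a + b) := by gcongr
  have ha0 : 0 < a := hm.trans_le ha
  have hb0 : 0 < b := hm.trans_le hb
  rw [hpq, show 1 / a - 1 / b = (b ^ 2 - a ^ 2) / (a * b * (a + b)) by field_simp; ring,
    abs_div, abs_sub_comm (b ^ 2), abs_of_pos (by positivity : 0 < a * b * (a + b))]
  exact div_le_div_of_nonneg_left (abs_nonneg _) (by positivity) hab

lemma abs_inv_sqrt_add_inv_sqrt_sub_le {p q m : ℝ} (hm : 0 < m) (hp : m ^ 2 ≤ p)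
    (hq : m ^ 2 ≤ q) :
    |1 / √p + 1 / √q - 2 / √((p + q) / 2)| ≤ (p - q) ^ 2 / (4 * m ^ 5) := by
  have hpq : p - q = √p ^ 2 - √q ^ 2 := by
    rw [Real.sq_sqrt (by nlinarith), Real.sq_sqrt (by nlinarith)]
  have hmid : √((p + q) / 2) ^ 2 = (√p ^ 2 + √q ^ 2) / 2 := by
    rw [Real.sq_sqrt (by nlinarith), Real.sq_sqrt (by nlinarith), Real.sq_sqrt (by nlinarith)]
  have ha : m ≤ √p := Real.le_sqrt_of_sq_le hp
  have hb : m ≤ √q := Real.le_sqrt_of_sq_le hq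
  have hc : m ≤ √((p + q) / 2) := Real.le_sqrt_of_sq_le (by linarith)
  set a := √p
  set b := √q
  set c := √((p + q) / 2)
  have ha0 : 0 < a := hm.trans_le ha
  have hb0 : 0 < b := hm.trans_le hb
  have hc0 : 0 < c := hm.trans_le hc
  have key : 1 / a + 1 / b - 2 / c
      = (a ^ 2 - b ^ 2) ^ 2 * (a + b + c) / (2 * (a + b) * (a * b * c * (a + c) * (b + c))) := by
    field_simp
    linear_combination (2 * (a + b) * ((a + b) * c + a ^ 2 + b ^ 2)) * hmid
  have hcab : c ≤ a + b := by nlinarith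
  have hden : 4 * m ^ 5 ≤ a * b * c * (a + c) * (b + c) := by
    calc 4 * m ^ 5 = m * m * m * (m + m) * (m + m) := by ring
      _ ≤ a * b * c * (a + c) * (b + c) := by gcongr
  rw [key, hpq, abs_of_nonneg (by positivity)]
  calc (a ^ 2 - b ^ 2) ^ 2 * (a + b + c) / (2 * (a + b) * (a * b * c * (a + c) * (b + c)))
      ≤ (a ^ 2 - b ^ 2) ^ 2 * (2 * (a + b)) / (2 * (a + b) * (4 * m ^ 5)) := by
        gcongr; linarith
    _ = (a ^ 2 - b ^ 2) ^ 2 / (4 * m ^ 5) := by field_simp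

lemma abs_inv_sqrt_sub_inv_sqrt_le_of_le {d u p q K : ℝ} (hd : 0 < d) (hu : |u| ≤ 1)
    (hp : d ^ 2 + u ^ 2 ≤ p) (hpq : p ≤ q) (hK : q - p ≤ K) :
    |1 / √p - 1 / √q| ≤ 3 * (1 + K) / (d * (1 + d) + |u|) := by
  have hD : 0 < d * (1 + d) + |u| := by positivity
  rcases le_or_gt d 1 with hd1 | hd1
  · have hsq : √(d ^ 2 + u ^ 2) ≤ √p := Real.sqrt_le_sqrt hp
    have hdu : d * (1 + d) + |u| ≤ 3 * √(d ^ 2 + u ^ 2) := by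
      have h1 : d ≤ √(d ^ 2 + u ^ 2) := Real.le_sqrt_of_sq_le (by nlinarith)
      have h2 : |u| ≤ √(d ^ 2 + u ^ 2) := Real.le_sqrt_of_sq_le (by rw [sq_abs]; nlinarith)
      nlinarith
    have hpos : 0 < √(d ^ 2 + u ^ 2) := by positivity
    have hmono : 1 / √q ≤ 1 / √p :=
      one_div_le_one_div_of_le (hpos.trans_le hsq) (Real.sqrt_le_sqrt hpq)
    rw [abs_of_nonneg (by linarith)]
    calc 1 / √p - 1 / √q ≤ 1 / √(d ^ 2 + u ^ 2) := by
          have : 0 ≤ 1 / √q := by positivity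
          linarith [one_div_le_one_div_of_le hpos hsq]
      _ ≤ 3 / (d * (1 + d) + |u|) := by
          rw [div_le_div_iff₀ hpos hD]; linarith
      _ ≤ 3 * (1 + K) / (d * (1 + d) + |u|) := by gcongr; linarith
  · calc |1 / √p - 1 / √q| ≤ |p - q| / (2 * d ^ 3) :=
          abs_inv_sqrt_sub_inv_sqrt_le hd (by nlinarith) (by nlinarith)
      _ ≤ K / (2 * d ^ 3) := by rw [abs_sub_comm, abs_of_nonneg (by linarith)]; gcongr
      _ ≤ 3 * (1 + K) / (d * (1 + d) + |u|) := by
          have hK0 : 0 ≤ K := by linarith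
          rw [div_le_div_iff₀ (by positivity) hD]
          have : d * (1 + d) + |u| ≤ 3 * d ^ 3 := by nlinarith
          nlinarith

lemma sq_half_add_le {d N w : ℝ} (hN : 0 ≤ N) (hw : N ≤ |w|) :
    ((d + N) / 2) ^ 2 ≤ d ^ 2 + w ^ 2 := by
  have : N ^ 2 ≤ w ^ 2 := by rw [← sq_abs w]; exact pow_le_pow_left₀ hN hw 2
  nlinarith [sq_nonneg (d - N)]

lemma abs_inv_sqrt_shift_second_diff_le {d N x : ℝ} (hd : 0 ≤ d) (hN : 0 < N) (hx : |x| ≤ N) :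
    |1 / √(d ^ 2 + (x + 2 * N) ^ 2) + 1 / √(d ^ 2 + (x - 2 * N) ^ 2)
      - 2 / √(d ^ 2 + x ^ 2 + 4 * N ^ 2)| ≤ 16 * N ^ 2 * x ^ 2 / ((d + N) / 2) ^ 5 := by
  obtain ⟨hx₁, hx₂⟩ := abs_le.1 hx
  have hP : ((d + N) / 2) ^ 2 ≤ d ^ 2 + (x + 2 * N) ^ 2 :=
    sq_half_add_le hN.le (by rw [abs_of_nonneg] <;> linarith)
  have hQ : ((d + N) / 2) ^ 2 ≤ d ^ 2 + (x - 2 * N) ^ 2 :=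
    sq_half_add_le hN.le (by rw [abs_of_nonpos] <;> linarith)
  rw [show d ^ 2 + x ^ 2 + 4 * N ^ 2
      = (d ^ 2 + (x + 2 * N) ^ 2 + (d ^ 2 + (x - 2 * N) ^ 2)) / 2 by ring]
  refine (abs_inv_sqrt_add_inv_sqrt_sub_le (by positivity) hP hQ).trans_eq ?_
  field_simp
  ring

lemma abs_inv_sqrt_add_sq_sub_le {d N u v : ℝ} (hd : 0 ≤ d) (hN : 0 < N) :
    |1 / √(d ^ 2 + u ^ 2 + 4 * N ^ 2) - 1 / √(d ^ 2 + v ^ 2 + 4 * N ^ 2)|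
      ≤ |u ^ 2 - v ^ 2| / (2 * ((d + N) / 2) ^ 3) := by
  have hlow : ∀ x, ((d + N) / 2) ^ 2 ≤ d ^ 2 + x ^ 2 + 4 * N ^ 2 := fun x ↦ by
    have := sq_half_add_le (d := d) (w := 2 * N) hN.le (by rw [abs_of_pos] <;> linarith)
    nlinarith
  refine (abs_inv_sqrt_sub_inv_sqrt_le (by positivity) (hlow u) (hlow v)).trans_eq ?_
  ring_nf

lemma sum_range_one_div_add_cube_le {y : ℝ} (hy : 0 < y) (n : ℕ) :
    ∑ k ∈ Finset.range n, 1 / (y + k + 1) ^ 3 ≤ 1 / (2 * y ^ 2) := by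
  set g : ℕ → ℝ := fun k ↦ 1 / (2 * (y + k) ^ 2)
  have hstep : ∀ k : ℕ, 1 / (y + k + 1) ^ 3 ≤ g k - g (k + 1) := by
    intro k
    have hY : 0 < y + k := by positivity
    simp only [g, Nat.cast_add, Nat.cast_one, ← add_assoc]
    rw [div_sub_div _ _ (by positivity) (by positivity), div_le_div_iff₀ (by positivity)
      (by positivity)]
    nlinarith [pow_pos hY 2, pow_pos hY 3, pow_pos hY 4]
  calc ∑ k ∈ Finset.range n, 1 / (y + k + 1) ^ 3 ≤ ∑ k ∈ Finset.range n, (g k - g (k + 1)) :=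
        Finset.sum_le_sum fun k _ ↦ hstep k
    _ = g 0 - g n := Finset.sum_range_sub' g n
    _ ≤ 1 / (2 * y ^ 2) := by
        have : 0 ≤ g n := by positivity
        simp only [g, Nat.cast_zero, add_zero] at this ⊢
        linarith

lemma tsum_int_eq_add_tsum_nat_pairs {G : Type*} [AddCommGroup G] [TopologicalSpace G]
    [IsTopologicalAddGroup G] [T2Space G] {f : ℤ → G} (hf : Summable f) :
    ∑' n, f n = f 0 + (f 1 + f (-1)) + ∑' k : ℕ, (f (k + 2) + f (-(k + 2))) := by
  have hpairs := hf.hasSum.nat_add_neg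
  have := hpairs.summable.sum_add_tsum_nat_add 2
  rw [hpairs.tsum_eq, Finset.sum_range_succ, Finset.sum_range_one] at this
  push_cast at this
  rw [neg_zero] at this
  linear_combination (norm := abel) -this

lemma abs_greenTerm_le_of_two_le_abs (d : ℝ) {x3 y3 : ℝ} (hx : x3 ∈ Set.Icc (0:ℝ) 1)
    (hy : y3 ∈ Set.Icc (0:ℝ) 1) {n : ℤ} (hn : 2 ≤ |n|) :
    |greenTerm d x3 y3 n| ≤ 5 / (n : ℝ) ^ 2 := by
  obtain ⟨hx0, hx1⟩ := hx
  obtain ⟨hy0, hy1⟩ := hy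
  have hN : (2 : ℝ) ≤ |(n : ℝ)| := by exact_mod_cast hn
  have hN0 : 0 < |(n : ℝ)| := by linarith
  have hlow₁ : |(n : ℝ)| ^ 2 ≤ d ^ 2 + (x3 - y3 + 2 * n) ^ 2 := by
    rw [sq_abs]; rcases le_abs'.1 hN with h | h <;> nlinarith
  have hlow₂ : |(n : ℝ)| ^ 2 ≤ d ^ 2 + (x3 + y3 - 2 * n) ^ 2 := by
    rw [sq_abs]; rcases le_abs'.1 hN with h | h <;> nlinarith
  have hdiff : |d ^ 2 + (x3 - y3 + 2 * n) ^ 2 - (d ^ 2 + (x3 + y3 - 2 * n) ^ 2)|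
      ≤ 10 * |(n : ℝ)| := by
    rw [show d ^ 2 + (x3 - y3 + 2 * n) ^ 2 - (d ^ 2 + (x3 + y3 - 2 * n) ^ 2)
      = 2 * x3 * (4 * n - 2 * y3) by ring, abs_mul, abs_of_nonneg (by positivity)]
    have : |4 * (n : ℝ) - 2 * y3| ≤ 4 * |(n : ℝ)| + 2 := by
      refine (abs_sub _ _).trans ?_
      rw [abs_mul, abs_of_pos (by norm_num : (0:ℝ) < 4),
        abs_of_nonneg (by positivity : 0 ≤ 2 * y3)]
      linarith
    nlinarith
  calc |greenTerm d x3 y3 n| ≤ 10 * |(n : ℝ)| / (2 * |(n : ℝ)| ^ 3) :=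
        (abs_inv_sqrt_sub_inv_sqrt_le hN0 hlow₁ hlow₂).trans (by gcongr)
    _ = 5 / (n : ℝ) ^ 2 := by
        rw [← sq_abs (n : ℝ)]; field_simp; ring

lemma summable_greenTerm (d : ℝ) {x3 y3 : ℝ} (hx : x3 ∈ Set.Icc (0:ℝ) 1)
    (hy : y3 ∈ Set.Icc (0:ℝ) 1) : Summable (greenTerm d x3 y3) := by
  refine Summable.of_norm_bounded_eventually
    ((summable_one_div_int_pow.2 one_lt_two).mul_left 5) ?_
  rw [Filter.eventually_cofinite]
  refine (Set.finite_Ioo (-2 : ℤ) 2).subset fun n hn ↦ ?_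
  by_contra hn2
  apply hn
  rw [Real.norm_eq_abs, mul_one_div]
  refine abs_greenTerm_le_of_two_le_abs d hx hy ?_
  simp only [Set.mem_Ioo, not_and_or, not_lt] at hn2
  rw [le_abs']
  omega

lemma abs_greenTerm_le_of_abs_le_one {d x3 y3 : ℝ} (hd : 0 < d) (hx : x3 ∈ Set.Icc (0:ℝ) 1)
    (hy : y3 ∈ Set.Icc (0:ℝ) 1) {n : ℤ} (hn : |n| ≤ 1) :
    |greenTerm d x3 y3 n| ≤ 39 / (d * (1 + d) + |x3 - y3|) := by
  obtain ⟨hx0, hx1⟩ := hx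
  obtain ⟨hy0, hy1⟩ := hy
  have hu : |x3 - y3| ≤ 1 := abs_le.2 ⟨by linarith, by linarith⟩
  have h39 : (39 : ℝ) = 3 * (1 + 12) := by norm_num
  rw [h39]
  obtain rfl | rfl | rfl : n = -1 ∨ n = 0 ∨ n = 1 := by rw [abs_le] at hn; omega
  all_goals
    unfold greenTerm
    push_cast
  · exact abs_inv_sqrt_sub_inv_sqrt_le_of_le hd hu (by nlinarith) (by nlinarith) (by nlinarith)
  · exact abs_inv_sqrt_sub_inv_sqrt_le_of_le hd hu (by nlinarith) (by nlinarith) (by nlinarith)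
  · rw [abs_sub_comm]
    exact abs_inv_sqrt_sub_inv_sqrt_le_of_le hd hu (by nlinarith) (by nlinarith) (by nlinarith)

lemma abs_greenTerm_add_greenTerm_neg_le {d x3 y3 : ℝ} (hd : 0 ≤ d)
    (hx : x3 ∈ Set.Icc (0:ℝ) 1) (hy : y3 ∈ Set.Icc (0:ℝ) 1) {n : ℤ} (hn : 2 ≤ n) :
    |greenTerm d x3 y3 n + greenTerm d x3 y3 (-n)| ≤ 2592 / (d + n) ^ 3 := by
  obtain ⟨hx0, hx1⟩ := hx
  obtain ⟨hy0, hy1⟩ := hy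
  have hN : (2 : ℝ) ≤ n := by exact_mod_cast hn
  set N : ℝ := (n : ℝ) with hN_def
  set m := (d + N) / 2 with hm_def
  have hm : 0 < m := by positivity
  set S : ℝ → ℝ := fun x ↦ 1 / √(d ^ 2 + (x + 2 * N) ^ 2) + 1 / √(d ^ 2 + (x - 2 * N) ^ 2)
    - 2 / √(d ^ 2 + x ^ 2 + 4 * N ^ 2)
  set R : ℝ → ℝ := fun x ↦ 1 / √(d ^ 2 + x ^ 2 + 4 * N ^ 2)
  have hsplit : greenTerm d x3 y3 n + greenTerm d x3 y3 (-n)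
      = S (x3 - y3) - S (x3 + y3) + 2 * (R (x3 - y3) - R (x3 + y3)) := by
    simp only [greenTerm, S, R, Int.cast_neg, ← hN_def]
    ring_nf
  have hu : |x3 - y3| ≤ 1 := abs_le.2 ⟨by linarith, by linarith⟩
  have hv : |x3 + y3| ≤ 2 := abs_le.2 ⟨by linarith, by linarith⟩
  have hN0 : 0 < N := by linarith
  have hSu : |S (x3 - y3)| ≤ 16 * N ^ 2 * 1 / m ^ 5 :=
    (abs_inv_sqrt_shift_second_diff_le hd hN0 (by linarith)).trans (by gcongr; nlinarith)
  have hSv : |S (x3 + y3)| ≤ 16 * N ^ 2 * 4 / m ^ 5 :=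
    (abs_inv_sqrt_shift_second_diff_le hd hN0 (by linarith)).trans (by gcongr; nlinarith)
  have hR : |R (x3 - y3) - R (x3 + y3)| ≤ 4 / (2 * m ^ 3) := by
    refine (abs_inv_sqrt_add_sq_sub_le hd hN0).trans (by
      gcongr
      rw [show (x3 - y3) ^ 2 - (x3 + y3) ^ 2 = -(4 * (x3 * y3)) by ring, abs_neg,
        abs_of_nonneg (by positivity)]
      nlinarith)
  have hNm : N ^ 2 / m ^ 2 ≤ 4 := by
    rw [div_le_iff₀ (by positivity), hm_def]; nlinarith
  rw [hsplit]
  calc |S (x3 - y3) - S (x3 + y3) + 2 * (R (x3 - y3) - R (x3 + y3))|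
      ≤ |S (x3 - y3)| + |S (x3 + y3)| + 2 * |R (x3 - y3) - R (x3 + y3)| := by
        refine (abs_add_le _ _).trans ?_
        rw [abs_mul, abs_two]
        linarith [abs_sub (S (x3 - y3)) (S (x3 + y3))]
    _ ≤ 16 * N ^ 2 * 1 / m ^ 5 + 16 * N ^ 2 * 4 / m ^ 5 + 2 * (4 / (2 * m ^ 3)) := by gcongr
    _ = (80 * (N ^ 2 / m ^ 2) + 4) / m ^ 3 := by field_simp; ring
    _ ≤ (80 * 4 + 4) / m ^ 3 := by gcongr
    _ = 2592 / (d + N) ^ 3 := by rw [hm_def]; field_simp; norm_num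

lemma abs_tsum_greenTerm_pairs_le {d x3 y3 : ℝ} (hd : 0 ≤ d) (hx : x3 ∈ Set.Icc (0:ℝ) 1)
    (hy : y3 ∈ Set.Icc (0:ℝ) 1) :
    |∑' k : ℕ, (greenTerm d x3 y3 (k + 2) + greenTerm d x3 y3 (-(k + 2)))|
      ≤ 1296 / (1 + d) ^ 2 := by
  set g : ℕ → ℝ := fun k ↦ 2592 * (1 / ((1 + d) + k + 1) ^ 3)
  have hg : ∀ k, 0 ≤ g k := fun k ↦ by positivity
  have hpartial : ∀ n, ∑ k ∈ Finset.range n, g k ≤ 2592 * (1 / (2 * (1 + d) ^ 2)) := fun n ↦ by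
    rw [← Finset.mul_sum]
    gcongr
    exact sum_range_one_div_add_cube_le (by positivity) n
  have hbound : ∀ k : ℕ,
      ‖greenTerm d x3 y3 (k + 2) + greenTerm d x3 y3 (-(k + 2))‖ ≤ g k := fun k ↦ by
    refine (abs_greenTerm_add_greenTerm_neg_le hd hx hy (by omega)).trans_eq ?_
    simp only [g, Int.cast_add, Int.cast_natCast, Int.cast_ofNat, mul_one_div]
    ring_nf
  calc _ ≤ ∑' k, g k := tsum_of_norm_bounded (summable_of_sum_range_le hg hpartial).hasSum hbound
    _ ≤ 2592 * (1 / (2 * (1 + d) ^ 2)) := Real.tsum_le_of_sum_range_le hg hpartial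
    _ = 1296 / (1 + d) ^ 2 := by field_simp; norm_num

lemma abs_tsum_greenTerm_le {d x3 y3 : ℝ} (hd : 0 < d) (hx : x3 ∈ Set.Icc (0:ℝ) 1)
    (hy : y3 ∈ Set.Icc (0:ℝ) 1) :
    |∑' n, greenTerm d x3 y3 n| ≤ 1413 / (d * (1 + d) + |x3 - y3|) := by
  have hD : 0 < d * (1 + d) + |x3 - y3| := by positivity
  have hD_le : d * (1 + d) + |x3 - y3| ≤ (1 + d) ^ 2 := by
    nlinarith [abs_le.2 (⟨by linarith [hx.1, hy.2], by linarith [hx.2, hy.1]⟩ :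
      -1 ≤ x3 - y3 ∧ x3 - y3 ≤ 1)]
  have hnear : ∀ n : ℤ, |n| ≤ 1 → |greenTerm d x3 y3 n| ≤ 39 / (d * (1 + d) + |x3 - y3|) :=
    fun n hn ↦ abs_greenTerm_le_of_abs_le_one hd hx hy hn
  have htail := (abs_tsum_greenTerm_pairs_le hd.le hx hy).trans
    (div_le_div_of_nonneg_left (by norm_num) hD hD_le)
  rw [tsum_int_eq_add_tsum_nat_pairs (summable_greenTerm d hx hy)]
  refine (abs_add_three _ _ _).trans ?_
  refine (add_le_add_three (hnear 0 (by norm_num)) ((abs_add_le _ _).trans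
    (add_le_add (hnear 1 (by norm_num)) (hnear (-1) (by norm_num)))) htail).trans_eq ?_
  ring

/-- Pointwise decay bound for the Green function of the Laplacian on
`ℝ² × [0,1]` with Dirichlet boundary conditions. -/
theorem green_function_decay :
    ∃ c : ℝ, 0 < c ∧
      ∀ (x' y' : EuclideanSpace ℝ (Fin 2)) (x3 y3 : ℝ),
        x3 ∈ Set.Icc (0:ℝ) 1 → y3 ∈ Set.Icc (0:ℝ) 1 → x' ≠ y' →
        |greenG x' x3 y' y3| ≤ c / (‖x' - y'‖ * (1 + ‖x' - y'‖) + |x3 - y3|) := by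
  refine ⟨1413, by norm_num, fun x' y' x3 y3 hx hy hne ↦ ?_⟩
  have hd : 0 < ‖x' - y'‖ := norm_pos_iff.2 (sub_ne_zero.2 hne)
  have hπ : 1 / (4 * π) ≤ 1 := by
    rw [div_le_one (by positivity)]; linarith [pi_gt_three]
  rw [greenG, abs_mul, abs_of_pos (by positivity)]
  exact (mul_le_of_le_one_left (abs_nonneg _) hπ).trans (abs_tsum_greenTerm_le hd hx hy)
end

section
/- Let u : ℝ³ → ℝ³ and p : ℝ³ → ℝ be smooth with ∇·u = 0 and (u·∇)u + ∇p − Δu = 0 on ℝ³, and suppose the head pressure Q(x) := |u(x)|²/2 + p(x) satisfies Q(x) → 0 as |x| → ∞. Then Q(x) ≤ 0 for every x ∈ ℝ³. -/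
open MeasureTheory

/-- The `i`-th standard basis vector of `ℝ³`. -/
noncomputable def e3 (i : Fin 3) : EuclideanSpace ℝ (Fin 3) := EuclideanSpace.single i 1

/-!
Write `Q = |u|²/2 + p` and `ω_ij = ∂_j u_i - ∂_i u_j`. The momentum equation in Lamb form reads
`∂_j Q = ∑_i u_i ω_ij + Δu_j`; differentiating once more and using `∇·u = 0` gives
`ΔQ - u·∇Q = ½ ∑_ij ω_ij² ≥ 0`, so `Q` is a subsolution of the elliptic operator `Δ - u·∇`.
Weak maximum principle: if `Q x₀ > 0`, take a ball `B_R ∋ x₀` with `Q < Q x₀ / 2` on its boundary,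
`C > sup_{B_R} |u|`, a unit vector `w` and a small `ε > 0`. Then `Q + ε exp (C ⟪w, x⟫)` still
exceeds its boundary values at `x₀`, so it has a local maximum inside `B_R`, where its gradient
vanishes and its Laplacian is `≤ 0`; but it satisfies `Δ - u·∇ > 0` there.
-/

open Filter Topology Metric InnerProductSpace Laplacian
open scoped ContDiff

section SecondDerivativeTest

theorem IsLocalMax.deriv_deriv_nonpos {g : ℝ → ℝ} {t : ℝ} (h : IsLocalMax g t)
    (hc : ContinuousAt g t) : deriv (deriv g) t ≤ 0 := by
  by_contra! hpos
  -- the second-derivative test also makes `t` a local minimum, hence `g` is constant near `t`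
  have hmin := isLocalMin_of_deriv_deriv_pos hpos h.deriv_eq_zero hc
  have hconst : g =ᶠ[𝓝 t] fun _ => g t := (h.and hmin).mono fun s hs => le_antisymm hs.1 hs.2
  have hderiv : deriv g =ᶠ[𝓝 t] fun _ => 0 :=
    hconst.eventuallyEq_nhds.mono fun s hs => by rw [hs.deriv_eq, deriv_const]
  rw [hderiv.deriv_eq, deriv_const] at hpos
  exact hpos.false

variable {E : Type*} [NormedAddCommGroup E] [NormedSpace ℝ E]

theorem iteratedFDeriv_two_self_eq_deriv_deriv_line {F : E → ℝ} (hF : ContDiff ℝ 2 F) (z v : E) :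
    iteratedFDeriv ℝ 2 F z ![v, v] = deriv (deriv fun t : ℝ => F (z + t • v)) 0 := by
  have hline : ∀ t : ℝ, HasDerivAt (fun s : ℝ => z + s • v) v t := fun t => by
    simpa using ((hasDerivAt_id t).smul_const v).const_add z
  have hF' : Differentiable ℝ (fderiv ℝ F) :=
    (hF.fderiv_right (m := 1) (by norm_num)).differentiable one_ne_zero
  have hderiv : deriv (fun t : ℝ => F (z + t • v)) = fun t => fderiv ℝ F (z + t • v) v :=
    funext fun t => ((hF.differentiable two_ne_zero _).hasFDerivAt.comp_hasDerivAt t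
      (hline t)).deriv
  rw [hderiv, iteratedFDeriv_two_apply]
  have := (((hF' _).hasFDerivAt.comp_hasDerivAt (0 : ℝ) (hline 0)).clm_apply
    (hasDerivAt_const 0 v)).deriv
  simpa using this.symm

theorem IsLocalMax.iteratedFDeriv_two_self_nonpos {F : E → ℝ} {z : E} (h : IsLocalMax F z)
    (hF : ContDiff ℝ 2 F) (v : E) : iteratedFDeriv ℝ 2 F z ![v, v] ≤ 0 := by
  have hline : Continuous fun t : ℝ => z + t • v := by fun_prop
  rw [iteratedFDeriv_two_self_eq_deriv_deriv_line hF]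
  refine IsLocalMax.deriv_deriv_nonpos ?_ (hF.continuous.comp hline).continuousAt
  exact IsLocalMax.comp_continuous (by simpa using h) hline.continuousAt

end SecondDerivativeTest

section MaximumPrinciple

variable {E : Type*} [NormedAddCommGroup E] [InnerProductSpace ℝ E]

theorem contDiff_exp_inner (c : ℝ) (w : E) {n : WithTop ℕ∞} :
    ContDiff ℝ n fun y => Real.exp (c * ⟪w, y⟫_ℝ) :=
  Real.contDiff_exp.comp (contDiff_const.mul (innerSL ℝ w).contDiff)

theorem fderiv_exp_inner (c : ℝ) (w x v : E) :
    fderiv ℝ (fun y => Real.exp (c * ⟪w, y⟫_ℝ)) x v = c * ⟪w, v⟫_ℝ * Real.exp (c * ⟪w, x⟫_ℝ) := by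
  have h : HasFDerivAt (fun y => Real.exp (c * ⟪w, y⟫_ℝ))
      (Real.exp (c * ⟪w, x⟫_ℝ) • c • innerSL ℝ w) x :=
    ((innerSL ℝ w).hasFDerivAt.const_smul c).exp
  rw [h.fderiv]
  simp only [smul_apply, coe_innerSL_apply, smul_eq_mul]
  ring

variable [FiniteDimensional ℝ E]

theorem IsLocalMax.laplacian_nonpos {F : E → ℝ} {z : E} (h : IsLocalMax F z)
    (hF : ContDiff ℝ 2 F) : Δ F z ≤ 0 := by
  rw [laplacian_eq_iteratedFDeriv_stdOrthonormalBasis]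
  exact Finset.sum_nonpos fun i _ => h.iteratedFDeriv_two_self_nonpos hF _

theorem not_isLocalMax_of_fderiv_lt_laplacian {F : E → ℝ} {z v : E} (hF : ContDiff ℝ 2 F)
    (h : fderiv ℝ F z v < Δ F z) : ¬IsLocalMax F z := fun hmax => by
  rw [hmax.fderiv_eq_zero] at h
  exact (h.trans_le (hmax.laplacian_nonpos hF)).false

theorem laplacian_exp_inner (c : ℝ) {w : E} (hw : ‖w‖ = 1) (x : E) :
    Δ (fun y => Real.exp (c * ⟪w, y⟫_ℝ)) x = c ^ 2 * Real.exp (c * ⟪w, x⟫_ℝ) := by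
  have hderiv : ∀ a b t : ℝ, deriv (fun t => a * Real.exp (b * t)) t = a * b * Real.exp (b * t) :=
    fun a b t => by
      have := (((hasDerivAt_id t).const_mul b).exp.const_mul a).deriv
      simp only [id, mul_one] at this
      rw [this]; ring
  have hsecond : ∀ v, iteratedFDeriv ℝ 2 (fun y => Real.exp (c * ⟪w, y⟫_ℝ)) x ![v, v]
      = (c * ⟪w, v⟫_ℝ) ^ 2 * Real.exp (c * ⟪w, x⟫_ℝ) := fun v => by
    have hline : (fun t : ℝ => Real.exp (c * ⟪w, x + t • v⟫_ℝ))
        = fun t => Real.exp (c * ⟪w, x⟫_ℝ) * Real.exp (c * ⟪w, v⟫_ℝ * t) := funext fun t => by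
      rw [← Real.exp_add, inner_add_right, real_inner_smul_right]; ring_nf
    rw [iteratedFDeriv_two_self_eq_deriv_deriv_line (contDiff_exp_inner c w), hline,
      funext (hderiv _ _), hderiv, mul_zero, Real.exp_zero]
    ring
  have hparseval : ∑ i, ⟪w, stdOrthonormalBasis ℝ E i⟫_ℝ ^ 2 = 1 := by
    simpa [sq, real_inner_comm w, hw] using (stdOrthonormalBasis ℝ E).sum_inner_mul_inner w w
  rw [laplacian_eq_iteratedFDeriv_stdOrthonormalBasis]
  simp only [hsecond, mul_pow, ← Finset.sum_mul, ← Finset.mul_sum, hparseval, mul_one]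

theorem fderiv_lt_laplacian_add_smul_exp_inner {F : E → ℝ} {z v w : E} {c ε : ℝ}
    (hF : ContDiff ℝ 2 F) (hsub : fderiv ℝ F z v ≤ Δ F z) (hw : ‖w‖ = 1) (hv : ‖v‖ < c)
    (hε : 0 < ε) :
    fderiv ℝ (F + ε • fun y => Real.exp (c * ⟪w, y⟫_ℝ)) z v
      < Δ (F + ε • fun y => Real.exp (c * ⟪w, y⟫_ℝ)) z := by
  have hφ := contDiff_exp_inner (n := 2) c w
  rw [fderiv_add (hF.differentiable two_ne_zero z) ((hφ.differentiable two_ne_zero z).const_smul ε),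
    fderiv_const_smul (hφ.differentiable two_ne_zero z),
    hF.contDiffAt.laplacian_add (f₂ := ε • _) (hφ.const_smul ε).contDiffAt,
    laplacian_smul ε hφ.contDiffAt]
  simp only [add_apply, smul_apply, smul_eq_mul, fderiv_exp_inner, laplacian_exp_inner c hw]
  have hinner : ⟪w, v⟫_ℝ < c := by
    calc ⟪w, v⟫_ℝ ≤ ‖w‖ * ‖v‖ := real_inner_le_norm w v
      _ < c := by rwa [hw, one_mul]
  have hc : 0 < c := (norm_nonneg v).trans_lt hv
  have hcv : c * ⟪w, v⟫_ℝ < c ^ 2 := by rw [sq]; exact mul_lt_mul_of_pos_left hinner hc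
  have := mul_lt_mul_of_pos_left (mul_lt_mul_of_pos_right hcv (Real.exp_pos (c * ⟪w, z⟫_ℝ))) hε
  linarith

theorem nonpos_of_fderiv_le_laplacian [Nontrivial E] {F : E → ℝ} {b : E → E}
    (hF : ContDiff ℝ 2 F) (hb : Continuous b) (hsub : ∀ x, fderiv ℝ F x (b x) ≤ Δ F x)
    (hF0 : Tendsto F (cocompact E) (𝓝 0)) (x₀ : E) : F x₀ ≤ 0 := by
  by_contra! hpos
  obtain ⟨R₀, -, hR₀⟩ := hasBasis_cobounded_norm.eventually_iff.1
    ((hF0.mono_left cobounded_eq_cocompact.le).eventually (gt_mem_nhds (half_pos hpos)))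
  set R := max R₀ ‖x₀‖
  obtain ⟨C₀, hC₀⟩ := (isCompact_closedBall (0 : E) R).exists_bound_of_continuousOn hb.continuousOn
  set C := max C₀ 0 + 1
  have hC : ∀ y ∈ closedBall (0 : E) R, ‖b y‖ < C := fun y hy =>
    (hC₀ y hy).trans_lt ((le_max_left _ _).trans_lt (lt_add_one _))
  obtain ⟨w, hw⟩ := exists_norm_eq E zero_le_one
  set ε := F x₀ / (4 * Real.exp (C * R))
  have hε : 0 < ε := by positivity
  set G := F + ε • fun y => Real.exp (C * ⟪w, y⟫_ℝ)
  have hG : ContDiff ℝ 2 G := hF.add ((contDiff_exp_inner C w).const_smul ε)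
  have hx₀ : x₀ ∈ closedBall (0 : E) R := mem_closedBall_zero_iff.2 (le_max_right _ _)
  have hboundary : ∀ y ∈ closedBall (0 : E) R \ ball 0 R, G y < G x₀ := by
    rintro y ⟨hyR, hy⟩
    rw [mem_closedBall_zero_iff] at hyR
    rw [mem_ball_zero_iff, not_lt] at hy
    have hexp : Real.exp (C * ⟪w, y⟫_ℝ) ≤ Real.exp (C * R) := by
      gcongr
      calc ⟪w, y⟫_ℝ ≤ ‖w‖ * ‖y‖ := real_inner_le_norm w y
        _ ≤ R := by rwa [hw, one_mul]
    have hεexp : ε * Real.exp (C * R) = F x₀ / 4 := by simp only [ε]; field_simp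
    have := mul_pos hε (Real.exp_pos (C * ⟪w, x₀⟫_ℝ))
    have := mul_le_mul_of_nonneg_left hexp hε.le
    have : F y < F x₀ / 2 := hR₀ ((le_max_left _ _).trans hy)
    simp only [G, Pi.add_apply, Pi.smul_apply, smul_eq_mul]
    linarith
  obtain ⟨z, hz, hmax⟩ := (isCompact_closedBall (0 : E) R).exists_isLocalMax_mem_open
    ball_subset_closedBall hG.continuous.continuousOn hx₀ hboundary isOpen_ball
  exact not_isLocalMax_of_fderiv_lt_laplacian hG (fderiv_lt_laplacian_add_smul_exp_inner hF
    (hsub z) hw (hC z (ball_subset_closedBall hz)) hε) hmax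

end MaximumPrinciple

section PartialDeriv

variable {ι : Type*} [Fintype ι] [DecidableEq ι]

noncomputable def partialDeriv (i : ι) (f : EuclideanSpace ℝ ι → ℝ) : EuclideanSpace ℝ ι → ℝ :=
  fun x => fderiv ℝ f x (EuclideanSpace.single i 1)

notation "∂[" i "]" => partialDeriv i

variable {f g : EuclideanSpace ℝ ι → ℝ} {x : EuclideanSpace ℝ ι}

theorem ContDiff.partialDeriv {m n : WithTop ℕ∞} (hf : ContDiff ℝ n f) (hmn : m + 1 ≤ n) (i : ι) :
    ContDiff ℝ m (∂[i] f) :=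
  (hf.fderiv_right hmn).clm_apply contDiff_const

theorem partialDeriv_add (hf : DifferentiableAt ℝ f x) (hg : DifferentiableAt ℝ g x) (i : ι) :
    ∂[i] (fun y => f y + g y) x = ∂[i] f x + ∂[i] g x := by
  simp [partialDeriv, fderiv_fun_add hf hg]

theorem partialDeriv_sub (hf : DifferentiableAt ℝ f x) (hg : DifferentiableAt ℝ g x) (i : ι) :
    ∂[i] (fun y => f y - g y) x = ∂[i] f x - ∂[i] g x := by
  simp [partialDeriv, fderiv_fun_sub hf hg]

theorem partialDeriv_mul (hf : DifferentiableAt ℝ f x) (hg : DifferentiableAt ℝ g x) (i : ι) :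
    ∂[i] (fun y => f y * g y) x = ∂[i] f x * g x + f x * ∂[i] g x := by
  simp only [partialDeriv, fderiv_fun_mul hf hg, add_apply, smul_apply, smul_eq_mul]
  ring

theorem partialDeriv_sum {κ : Type*} {s : Finset κ} {f : κ → EuclideanSpace ℝ ι → ℝ}
    (hf : ∀ k ∈ s, DifferentiableAt ℝ (f k) x) (i : ι) :
    ∂[i] (fun y => ∑ k ∈ s, f k y) x = ∑ k ∈ s, ∂[i] (f k) x := by
  simp [partialDeriv, fderiv_fun_sum hf]

theorem partialDeriv_partialDeriv_eq_fderiv_fderiv (hf : DifferentiableAt ℝ (fderiv ℝ f) x)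
    (i j : ι) :
    ∂[i] (∂[j] f) x
      = fderiv ℝ (fderiv ℝ f) x (EuclideanSpace.single i 1) (EuclideanSpace.single j 1) := by
  change fderiv ℝ (fun y => fderiv ℝ f y (EuclideanSpace.single j 1)) x _ = _
  simp [fderiv_clm_apply hf (differentiableAt_const _)]

theorem partialDeriv_comm (hf : ContDiff ℝ 2 f) (i j : ι) :
    ∂[i] (∂[j] f) x = ∂[j] (∂[i] f) x := by
  have hsymm := hf.contDiffAt.isSymmSndFDerivAt (x := x) (by simp)
  have hf' : DifferentiableAt ℝ (fderiv ℝ f) x :=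
    ((hf.fderiv_right (m := 1) (by norm_num)).differentiable one_ne_zero) x
  rw [partialDeriv_partialDeriv_eq_fderiv_fderiv hf',
    partialDeriv_partialDeriv_eq_fderiv_fderiv hf', hsymm.eq]

theorem laplacian_eq_sum_partialDeriv (hf : ContDiff ℝ 2 f) (x : EuclideanSpace ℝ ι) :
    Δ f x = ∑ i, ∂[i] (∂[i] f) x := by
  have hf' : DifferentiableAt ℝ (fderiv ℝ f) x :=
    ((hf.fderiv_right (m := 1) (by norm_num)).differentiable one_ne_zero) x
  simp [laplacian_eq_iteratedFDeriv_orthonormalBasis f (EuclideanSpace.basisFun ι ℝ),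
    iteratedFDeriv_two_apply, partialDeriv_partialDeriv_eq_fderiv_fderiv hf']

theorem fderiv_apply_eq_sum_partialDeriv (x v : EuclideanSpace ℝ ι) :
    fderiv ℝ f x v = ∑ i, v i * ∂[i] f x := by
  conv_lhs => rw [← (EuclideanSpace.basisFun ι ℝ).sum_repr v]
  simp [partialDeriv]

theorem partialDeriv_coord {u : EuclideanSpace ℝ ι → EuclideanSpace ℝ ι}
    (hu : DifferentiableAt ℝ u x) (i j : ι) :
    ∂[i] (u · j) x = fderiv ℝ u x (EuclideanSpace.single i 1) j := by
  have := ((EuclideanSpace.proj (𝕜 := ℝ) j).hasFDerivAt.comp x hu.hasFDerivAt).fderiv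
  exact congrArg (· (EuclideanSpace.single i 1)) this

noncomputable def divergence (g : ι → EuclideanSpace ℝ ι → ℝ) : EuclideanSpace ℝ ι → ℝ :=
  fun x => ∑ j, ∂[j] (g j) x

theorem divergence_partialDeriv {g : ι → EuclideanSpace ℝ ι → ℝ} (hg : ∀ j, ContDiff ℝ 2 (g j))
    (i : ι) : divergence (fun j => ∂[i] (g j)) = ∂[i] (divergence g) := funext fun x => by
  unfold divergence
  rw [partialDeriv_sum fun j _ =>
    ((hg j).partialDeriv (m := 1) (by norm_num) j).differentiable one_ne_zero x]
  exact Finset.sum_congr rfl fun j _ => partialDeriv_comm (hg j) j i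

theorem divergence_partialDeriv_eq_zero {g : ι → EuclideanSpace ℝ ι → ℝ}
    (hg : ∀ j, ContDiff ℝ 2 (g j)) (hdiv : divergence g = 0) (i : ι) :
    divergence (fun j => ∂[i] (g j)) = 0 := by
  rw [divergence_partialDeriv hg, hdiv]
  ext x
  simp [partialDeriv]

end PartialDeriv

theorem Finset.sum_sum_mul_mul_antisymm_eq_zero {ι : Type*} [Fintype ι] {B : ι → ι → ℝ}
    (hB : ∀ i j, B j i = -B i j) (a : ι → ℝ) : ∑ j, ∑ i, a j * (a i * B i j) = 0 := by
  have hneg : ∑ j, ∑ i, a j * (a i * B i j) = -∑ j, ∑ i, a j * (a i * B i j) := by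
    conv_lhs => rw [Finset.sum_comm]
    simp only [← Finset.sum_neg_distrib]
    exact Finset.sum_congr rfl fun j _ => Finset.sum_congr rfl fun i _ => by rw [hB]; ring
  linarith

theorem Finset.sum_sum_mul_eq_half_sum_sq_of_sub_swap {ι : Type*} [Fintype ι]
    {A B : ι → ι → ℝ} (hB : ∀ i j, B i j = A i j - A j i) :
    ∑ j, ∑ i, A i j * B i j = (∑ j, ∑ i, B i j ^ 2) / 2 := by
  have hswap : ∑ j, ∑ i, A i j * B i j = -∑ j, ∑ i, A j i * B i j := by
    conv_lhs => rw [Finset.sum_comm]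
    simp only [← Finset.sum_neg_distrib]
    exact Finset.sum_congr rfl fun j _ => Finset.sum_congr rfl fun i _ => by rw [hB, hB]; ring
  have hsq : ∑ j, ∑ i, B i j ^ 2 = ∑ j, ∑ i, A i j * B i j - ∑ j, ∑ i, A j i * B i j := by
    simp only [← Finset.sum_sub_distrib]
    exact Finset.sum_congr rfl fun j _ => Finset.sum_congr rfl fun i _ => by rw [hB]; ring
  linarith

section NavierStokes

variable {ι : Type*} [Fintype ι]
  {u : EuclideanSpace ℝ ι → EuclideanSpace ℝ ι} {p : EuclideanSpace ℝ ι → ℝ}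

noncomputable def headPressure (u : EuclideanSpace ℝ ι → EuclideanSpace ℝ ι)
    (p : EuclideanSpace ℝ ι → ℝ) : EuclideanSpace ℝ ι → ℝ :=
  fun x => ‖u x‖ ^ 2 / 2 + p x

theorem ContDiff.headPressure {n : WithTop ℕ∞} (hu : ContDiff ℝ n u) (hp : ContDiff ℝ n p) :
    ContDiff ℝ n (headPressure u p) :=
  ((hu.norm_sq ℝ).div_const 2).add hp

variable [DecidableEq ι]

structure IsSteadyNavierStokes (u : EuclideanSpace ℝ ι → EuclideanSpace ℝ ι)
    (p : EuclideanSpace ℝ ι → ℝ) : Prop where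
  divergence_eq_zero : divergence (fun j x => u x j) = 0
  momentum (x : EuclideanSpace ℝ ι) (j : ι) :
    ∑ i, u x i * ∂[i] (u · j) x + ∂[j] p x - ∑ i, ∂[i] (∂[i] (u · j)) x = 0

/-- In `ℝ³`, `½ ∑ i, ∑ j, vorticity u i j x ^ 2 = |(∇ × u) x|²`. -/
noncomputable def vorticity (u : EuclideanSpace ℝ ι → EuclideanSpace ℝ ι) (i j : ι) :
    EuclideanSpace ℝ ι → ℝ :=
  fun x => ∂[j] (u · i) x - ∂[i] (u · j) x

theorem contDiff_vorticity (hu : ContDiff ℝ ∞ u) (i j : ι) : ContDiff ℝ ∞ (vorticity u i j) :=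
  (((contDiff_piLp 2).1 hu i).partialDeriv (m := ∞) (by simp) j).sub
    (((contDiff_piLp 2).1 hu j).partialDeriv (m := ∞) (by simp) i)

theorem partialDeriv_norm_sq_div_two {x : EuclideanSpace ℝ ι} (hu : DifferentiableAt ℝ u x)
    (j : ι) : ∂[j] (fun y => ‖u y‖ ^ 2 / 2) x = ∑ i, u x i * ∂[j] (u · i) x := by
  have h := (hu.hasFDerivAt.norm_sq).const_mul (2⁻¹ : ℝ)
  simp_rw [div_eq_inv_mul]
  rw [partialDeriv, h.fderiv]
  simp [PiLp.inner_apply, partialDeriv_coord hu, mul_comm]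

/-- The Lamb form of the momentum equation. -/
theorem IsSteadyNavierStokes.partialDeriv_headPressure (h : IsSteadyNavierStokes u p)
    {x : EuclideanSpace ℝ ι} (hu : DifferentiableAt ℝ u x) (hp : DifferentiableAt ℝ p x) (j : ι) :
    ∂[j] (headPressure u p) x
      = ∑ i, u x i * vorticity u i j x + ∑ i, ∂[i] (∂[i] (u · j)) x := by
  have hnorm : DifferentiableAt ℝ (fun y => ‖u y‖ ^ 2 / 2) x := by
    simpa only [div_eq_mul_inv] using (hu.norm_sq (𝕜 := ℝ)).mul_const (2⁻¹ : ℝ)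
  unfold headPressure
  rw [partialDeriv_add hnorm hp, partialDeriv_norm_sq_div_two hu]
  simp only [vorticity, mul_sub, Finset.sum_sub_distrib]
  linarith [h.momentum x j]

theorem IsSteadyNavierStokes.sum_mul_partialDeriv_headPressure (h : IsSteadyNavierStokes u p)
    (hu : Differentiable ℝ u) (hp : Differentiable ℝ p) (x : EuclideanSpace ℝ ι) :
    ∑ j, u x j * ∂[j] (headPressure u p) x = ∑ j, ∑ i, u x j * ∂[i] (∂[i] (u · j)) x := by
  have hlamb := Finset.sum_sum_mul_mul_antisymm_eq_zero
    (B := fun i j => vorticity u i j x) (fun i j => by simp only [vorticity, neg_sub]) (u x ·)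
  simp only [h.partialDeriv_headPressure (hu x) (hp x), mul_add, Finset.sum_add_distrib,
    Finset.mul_sum, hlamb, zero_add]

theorem IsSteadyNavierStokes.partialDeriv_partialDeriv_headPressure
    (h : IsSteadyNavierStokes u p) (hu : ContDiff ℝ ∞ u) (hp : ContDiff ℝ ∞ p)
    (x : EuclideanSpace ℝ ι) (j : ι) :
    ∂[j] (∂[j] (headPressure u p)) x
      = ∑ i, ∂[j] (u · i) x * vorticity u i j x + ∑ i, u x i * ∂[j] (∂[j] (u · i)) x
        - ∑ i, u x i * ∂[j] (∂[i] (u · j)) x + ∑ i, ∂[j] (∂[i] (∂[i] (u · j))) x := by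
  have hU : ∀ i, ContDiff ℝ ∞ (u · i) := (contDiff_piLp 2).1 hu
  have hdiff : ∀ {f : EuclideanSpace ℝ ι → ℝ}, ContDiff ℝ ∞ f → Differentiable ℝ f :=
    fun hf => hf.differentiable (by simp)
  have hpartial : ∀ {f : EuclideanSpace ℝ ι → ℝ}, ContDiff ℝ ∞ f → ∀ i, ContDiff ℝ ∞ (∂[i] f) :=
    fun hf i => hf.partialDeriv (by simp) i
  have hΔU : ∀ i, Differentiable ℝ (∂[i] (∂[i] (u · j))) := fun i =>
    hdiff (hpartial (hpartial (hU j) i) i)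
  have hQ : ∂[j] (headPressure u p)
      = fun y => ∑ i, u y i * vorticity u i j y + ∑ i, ∂[i] (∂[i] (u · j)) y :=
    funext fun y => h.partialDeriv_headPressure (hu.differentiable (by simp) y) (hdiff hp y) j
  have hvort : ∀ i, ∂[j] (vorticity u i j) x
      = ∂[j] (∂[j] (u · i)) x - ∂[j] (∂[i] (u · j)) x := fun i =>
    partialDeriv_sub (hdiff (hpartial (hU i) j) x) (hdiff (hpartial (hU j) i) x) j
  have hprod : ∀ i, DifferentiableAt ℝ (fun y => u y i * vorticity u i j y) x := fun i =>
    (hdiff (hU i) x).fun_mul (hdiff (contDiff_vorticity hu i j) x)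
  rw [hQ, partialDeriv_add (DifferentiableAt.fun_sum fun i _ => hprod i)
      (DifferentiableAt.fun_sum fun i _ => hΔU i x),
    partialDeriv_sum fun i _ => hprod i, partialDeriv_sum fun i _ => hΔU i x]
  simp only [partialDeriv_mul (hdiff (hU _) x) (hdiff (contDiff_vorticity hu _ j) x), hvort,
    mul_sub, Finset.sum_add_distrib, Finset.sum_sub_distrib]
  ring

theorem IsSteadyNavierStokes.sum_partialDeriv_partialDeriv_headPressure
    (h : IsSteadyNavierStokes u p) (hu : ContDiff ℝ ∞ u) (hp : ContDiff ℝ ∞ p)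
    (x : EuclideanSpace ℝ ι) :
    ∑ j, ∂[j] (∂[j] (headPressure u p)) x
      = (∑ j, ∑ i, vorticity u i j x ^ 2) / 2 + ∑ j, ∑ i, u x i * ∂[j] (∂[j] (u · i)) x := by
  have hU : ∀ i, ContDiff ℝ ∞ (u · i) := (contDiff_piLp 2).1 hu
  have hdiv1 : ∀ i, divergence (fun j => ∂[i] (u · j)) = 0 := fun i =>
    divergence_partialDeriv_eq_zero (fun j => (hU j).of_le ENat.LEInfty.out)
      h.divergence_eq_zero i
  have hdiv2 : ∀ i, divergence (fun j => ∂[i] (∂[i] (u · j))) = 0 := fun i =>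
    divergence_partialDeriv_eq_zero
      (fun j => ((hU j).partialDeriv (m := ∞) (by simp) i).of_le ENat.LEInfty.out) (hdiv1 i) i
  have hgradDiv : ∑ j, ∑ i, u x i * ∂[j] (∂[i] (u · j)) x = 0 := by
    rw [Finset.sum_comm]
    simp only [← Finset.mul_sum]
    exact Finset.sum_eq_zero fun i _ => by rw [← divergence, hdiv1, Pi.zero_apply, mul_zero]
  have hΔdiv : ∑ j, ∑ i, ∂[j] (∂[i] (∂[i] (u · j))) x = 0 := by
    rw [Finset.sum_comm]
    exact Finset.sum_eq_zero fun i _ => congrFun (hdiv2 i) x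
  have hvorticity := Finset.sum_sum_mul_eq_half_sum_sq_of_sub_swap
    (A := fun i j => ∂[j] (u · i) x) (B := fun i j => vorticity u i j x) fun i j => rfl
  simp only [h.partialDeriv_partialDeriv_headPressure hu hp, Finset.sum_add_distrib,
    Finset.sum_sub_distrib, hgradDiv, hΔdiv, hvorticity]
  ring

theorem IsSteadyNavierStokes.laplacian_headPressure_sub_fderiv (h : IsSteadyNavierStokes u p)
    (hu : ContDiff ℝ ∞ u) (hp : ContDiff ℝ ∞ p) (x : EuclideanSpace ℝ ι) :
    Δ (headPressure u p) x - fderiv ℝ (headPressure u p) x (u x)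
      = (∑ j, ∑ i, vorticity u i j x ^ 2) / 2 := by
  rw [laplacian_eq_sum_partialDeriv ((hu.headPressure hp).of_le ENat.LEInfty.out),
    fderiv_apply_eq_sum_partialDeriv, h.sum_partialDeriv_partialDeriv_headPressure hu hp,
    h.sum_mul_partialDeriv_headPressure (hu.differentiable (by simp)) (hp.differentiable (by simp)),
    Finset.sum_comm (f := fun j i => u x j * ∂[i] (∂[i] (u · j)) x), add_sub_cancel_right]

theorem IsSteadyNavierStokes.fderiv_headPressure_le_laplacian (h : IsSteadyNavierStokes u p)
    (hu : ContDiff ℝ ∞ u) (hp : ContDiff ℝ ∞ p) (x : EuclideanSpace ℝ ι) :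
    fderiv ℝ (headPressure u p) x (u x) ≤ Δ (headPressure u p) x := by
  rw [← sub_nonneg, h.laplacian_headPressure_sub_fderiv hu hp x]
  positivity

end NavierStokes

/-- For a smooth solution of the steady Navier–Stokes equations on `ℝ³`,
if the head pressure `Q = |u|²/2 + p` tends to `0` at infinity, then `Q ≤ 0` everywhere. -/
theorem head_pressure_nonpositive
    (u : EuclideanSpace ℝ (Fin 3) → EuclideanSpace ℝ (Fin 3))
    (p : EuclideanSpace ℝ (Fin 3) → ℝ)
    (hu : ContDiff ℝ (⊤ : ℕ∞) u) (hp : ContDiff ℝ (⊤ : ℕ∞) p)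
    (hdiv : ∀ x, (∑ i : Fin 3, fderiv ℝ u x (e3 i) i) = 0)
    (hNS : ∀ x, ∀ j : Fin 3,
      (∑ i : Fin 3, u x i * fderiv ℝ u x (e3 i) j)
        + fderiv ℝ p x (e3 j)
        - (∑ i : Fin 3, fderiv ℝ (fun y => fderiv ℝ u y (e3 i) j) x (e3 i)) = 0)
    (hQ0 : Filter.Tendsto (fun x => ‖u x‖ ^ 2 / 2 + p x)
      (Filter.cocompact (EuclideanSpace ℝ (Fin 3))) (nhds 0)) :
    ∀ x, ‖u x‖ ^ 2 / 2 + p x ≤ 0 := by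
  have hcoord : ∀ i j, ∂[i] (u · j) = fun y => fderiv ℝ u y (e3 i) j := fun i j =>
    funext fun y => partialDeriv_coord (hu.differentiable (by simp) y) i j
  have hsol : IsSteadyNavierStokes u p :=
    { divergence_eq_zero := funext fun x => by simpa [divergence, hcoord] using hdiv x
      momentum := fun x j => by simp only [hcoord]; exact hNS x j }
  exact nonpos_of_fderiv_le_laplacian ((hu.headPressure hp).of_le ENat.LEInfty.out) hu.continuous
    (hsol.fderiv_headPressure_le_laplacian hu hp) hQ0
end
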